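/- Let φ_1,…,φ_m ∈ ℝ^d be feature vectors spanning ℝ^d, and let π* be a probability distribution on {1,…,m} that maximizes det V(π) over all probability distributions π on {1,…,m}, where V(π) = Σ_j π(j) φ_j φ_jᵀ. Then V(π*) is invertible and φ_jᵀ V(π*)^{-1} φ_j ≤ d for every index j ∈ {1,…,m}. -/

import Mathlib

/-!
The uniform design is positive definite because the features span, so the maximal determinant
is positive. Moving the optimal weights `ws` towards the vertex `j`, i.e. to
`(ws + s • e_j) / (1 + s)`, replaces `V` by `(V + s φ_j φ_jᵀ) / (1 + s)`, whose determinant is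
`det V * (1 + s q) / (1 + s) ^ d` with `q = φ_jᵀ V⁻¹ φ_j` by the matrix determinant lemma.
Optimality therefore gives `1 + s q ≤ (1 + s) ^ d` for all `s > 0`, and comparing derivatives
at `s = 0` yields `q ≤ d`.
-/

open Matrix Finset

/-- The design matrix `V(w) = Σ j, w j • φ j (φ j)ᵀ` of feature vectors `φ` under
weights `w`. -/
noncomputable def designMatrix {ι : Type*} [Fintype ι] {d : ℕ} (φ : ι → Fin d → ℝ)
    (w : ι → ℝ) : Matrix (Fin d) (Fin d) ℝ :=
  ∑ j, w j • vecMulVec (φ j) (φ j)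

theorem Matrix.det_add_vecMulVec {n R : Type*} [Fintype n] [DecidableEq n] [CommRing R]
    {A : Matrix n n R} (hA : IsUnit A.det) (u v : n → R) :
    (A + vecMulVec u v).det = A.det * (1 + v ⬝ᵥ A⁻¹ *ᵥ u) := by
  rw [vecMulVec_eq (Fin 1), det_add_replicateCol_mul_replicateRow hA, Matrix.mul_assoc,
    ← replicateCol_mulVec, replicateRow_mul_replicateCol]
  simp [det_unique]

theorem le_of_forall_one_add_mul_le_pow {d : ℕ} {q : ℝ}
    (h : ∀ s > 0, 1 + s * q ≤ (1 + s) ^ d) : q ≤ d := by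
  have hslope := (hasDerivAt_pow d (1 : ℝ)).tendsto_slope_zero_right
  simp only [one_pow, mul_one] at hslope
  refine ge_of_tendsto hslope (eventually_nhdsWithin_of_forall fun s (hs : 0 < s) => ?_)
  rw [smul_eq_mul, le_inv_mul_iff₀ hs]
  linarith [h s hs]

section designMatrix

variable {ι : Type*} {d : ℕ} (φ : ι → Fin d → ℝ)

theorem eq_zero_of_forall_dotProduct_eq_zero (hspan : Submodule.span ℝ (Set.range φ) = ⊤)
    {x : Fin d → ℝ} (hx : ∀ j, φ j ⬝ᵥ x = 0) : x = 0 := by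
  have hker :
      Submodule.span ℝ (Set.range φ) ≤ LinearMap.ker ((dotProductBilin ℝ ℝ).flip x) := by
    rw [Submodule.span_le]
    rintro _ ⟨j, rfl⟩
    exact hx j
  rw [hspan] at hker
  exact dotProduct_self_eq_zero.mp (hker Submodule.mem_top)

variable [Fintype ι]

theorem designMatrix_add (w w' : ι → ℝ) :
    designMatrix φ (w + w') = designMatrix φ w + designMatrix φ w' := by
  simp only [designMatrix, Pi.add_apply, add_smul, sum_add_distrib]

theorem designMatrix_smul (c : ℝ) (w : ι → ℝ) :
    designMatrix φ (c • w) = c • designMatrix φ w := by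
  simp only [designMatrix, Pi.smul_apply, smul_eq_mul, mul_smul, smul_sum]

theorem designMatrix_single [DecidableEq ι] (j : ι) (c : ℝ) :
    designMatrix φ (Pi.single j c) = c • vecMulVec (φ j) (φ j) := by
  simp [designMatrix, Pi.single_apply, ite_smul]

theorem dotProduct_designMatrix_mulVec (w : ι → ℝ) (x : Fin d → ℝ) :
    x ⬝ᵥ designMatrix φ w *ᵥ x = ∑ j, w j * (φ j ⬝ᵥ x) ^ 2 := by
  simp only [designMatrix, sum_mulVec, dotProduct_sum, smul_mulVec, dotProduct_smul,
    vecMulVec_mulVec, smul_eq_mul]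
  exact sum_congr rfl fun j _ => by rw [op_smul_eq_mul, dotProduct_comm x]; ring

theorem posDef_designMatrix (hspan : Submodule.span ℝ (Set.range φ) = ⊤) {w : ι → ℝ}
    (hw : ∀ j, 0 < w j) : (designMatrix φ w).PosDef := by
  refine posDef_iff_dotProduct_mulVec.mpr ⟨?_, fun x hx => ?_⟩
  · simp only [designMatrix, IsHermitian, conjTranspose_eq_transpose_of_trivial, transpose_sum,
      transpose_smul, transpose_vecMulVec]
  · rw [star_trivial, dotProduct_designMatrix_mulVec]
    obtain ⟨j, hj⟩ : ∃ j, φ j ⬝ᵥ x ≠ 0 := by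
      by_contra! h
      exact hx (eq_zero_of_forall_dotProduct_eq_zero φ hspan h)
    exact sum_pos' (fun i _ => by have := hw i; positivity)
      ⟨j, mem_univ j, by have := hw j; positivity⟩

theorem one_add_mul_dotProduct_inv_mulVec_le_pow {ws : ι → ℝ} (hws0 : ∀ j, 0 ≤ ws j)
    (hws1 : ∑ j, ws j = 1)
    (hmax : ∀ w : ι → ℝ, (∀ j, 0 ≤ w j) → ∑ j, w j = 1 →
      (designMatrix φ w).det ≤ (designMatrix φ ws).det)
    (hpos : 0 < (designMatrix φ ws).det) (j : ι) {s : ℝ} (hs : 0 < s) :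
    1 + s * (φ j ⬝ᵥ (designMatrix φ ws)⁻¹ *ᵥ φ j) ≤ (1 + s) ^ d := by
  classical
  set V := designMatrix φ ws
  set w := (1 + s)⁻¹ • (ws + Pi.single j s)
  have hsingle : 0 ≤ (Pi.single j s : ι → ℝ) := Pi.single_nonneg.mpr hs.le
  have hw0 : ∀ i, 0 ≤ w i := fun i =>
    mul_nonneg (by positivity) (add_nonneg (hws0 i) (hsingle i))
  have hw1 : ∑ i, w i = 1 := by
    simp only [w, Pi.smul_apply, Pi.add_apply, smul_eq_mul, ← mul_sum, sum_add_distrib, hws1,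
      sum_pi_single', mem_univ, if_true]
    field_simp
  have hdet := hmax w hw0 hw1
  rw [designMatrix_smul, designMatrix_add, designMatrix_single, ← smul_vecMulVec, det_smul,
    det_add_vecMulVec (isUnit_iff_ne_zero.mpr hpos.ne'), mulVec_smul, dotProduct_smul,
    Fintype.card_fin, inv_pow, smul_eq_mul, inv_mul_le_iff₀ (by positivity), mul_comm _ V.det]
    at hdet
  exact le_of_mul_le_mul_left hdet hpos

end designMatrix

/-- **A D-optimal design is a G-optimal design.** Let `φ 1, …, φ m ∈ ℝ^d` span `ℝ^d`
and let `ws` be a probability distribution on `{1, …, m}` maximizing `det V(w)` over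
probability distributions `w`, where `V(w) = Σ j, w j • φ j (φ j)ᵀ`. Then `V(ws)` is
invertible and `(φ j)ᵀ V(ws)⁻¹ (φ j) ≤ d` for every index `j`. -/
theorem det_maximizer_bounds_quadratic_forms
    {ι : Type*} [Fintype ι] [Nonempty ι] {d : ℕ} (φ : ι → Fin d → ℝ)
    (hspan : Submodule.span ℝ (Set.range φ) = ⊤)
    (ws : ι → ℝ) (hws0 : ∀ j, 0 ≤ ws j) (hws1 : ∑ j, ws j = 1)
    (hmax : ∀ w : ι → ℝ, (∀ j, 0 ≤ w j) → ∑ j, w j = 1 →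
      (designMatrix φ w).det ≤ (designMatrix φ ws).det) :
    IsUnit (designMatrix φ ws).det ∧
    ∀ j, φ j ⬝ᵥ ((designMatrix φ ws)⁻¹ *ᵥ φ j) ≤ d := by
  have huniform : ∑ _j : ι, (Fintype.card ι : ℝ)⁻¹ = 1 := by simp
  have hpos : 0 < (designMatrix φ ws).det :=
    (posDef_designMatrix φ hspan fun _ => by positivity).det_pos.trans_le
      (hmax _ (fun _ => by positivity) huniform)
  exact ⟨isUnit_iff_ne_zero.mpr hpos.ne', fun j => le_of_forall_one_add_mul_le_pow fun s hs =>
    one_add_mul_dotProduct_inv_mulVec_le_pow φ hws0 hws1 hmax hpos j hs⟩
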